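/- Let u = x^a x̄^b x^c and v^{inv} = x̄^d (so v = x^d). Then the word x^a x̄^b x^c # x̄^d lies in WP(FIM_1) if and only if λ(u)=λ(v)=0, ν(u)=ν(v)=d and μ(u)=μ(v)=d, i.e. if and only if b ≤ a, max(a, a-b+c) = d, and a-b+c = d. -/

import Mathlib

/-- Step of a letter: `true` = x (+1), `false` = x̄ (-1). -/
def step (b : Bool) : ℤ := if b then 1 else -1

/-- μ(w): endpoint of the path traced by `w` starting at 0. -/
def mu (w : List Bool) : ℤ := (w.map step).sum

/-- ν(w): maximum position visited (max of μ over prefixes). -/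
def nu (w : List Bool) : ℤ := (w.inits.map mu).foldr max 0

/-- λ(w): negative of the minimum position visited. -/
def lam (w : List Bool) : ℤ := -((w.inits.map mu).foldr min 0)

/-- The formal inverse word: reverse and swap x ↔ x̄. -/
def winv (w : List Bool) : List Bool := w.reverse.map (fun b => !b)

/-- The word u # v^inv over the alphabet {x, x̄, #} (encoded as `Option Bool`:
`some true` = x, `some false` = x̄, `none` = #). -/
def emb (u v : List Bool) : List (Option Bool) :=
  u.map some ++ [none] ++ (winv v).map some

/-- WP(FIM₁, {x}) = {u # v^inv : u =_{FIM₁} v}. -/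
def WP1 : Language (Option Bool) :=
  {w | ∃ u v : List Bool, w = emb u v ∧ lam u = lam v ∧ nu u = nu v ∧ mu u = mu v}

namespace StmtAux

/-- Running-max function. -/
def N : List Bool → ℤ
  | [] => 0
  | b :: w => max 0 (step b + N w)

/-- Running-min function. -/
def M : List Bool → ℤ
  | [] => 0
  | b :: w => min 0 (step b + M w)

lemma mu_nil : mu [] = 0 := rfl

lemma step_true : step true = 1 := rfl

lemma step_false : step false = -1 := rfl

lemma N_nonneg : ∀ w : List Bool, 0 ≤ N w
  | [] => le_refl 0
  | b :: w => le_max_left 0 _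

lemma M_nonpos : ∀ w : List Bool, M w ≤ 0
  | [] => le_refl 0
  | b :: w => min_le_left 0 _

lemma mu_cons (b : Bool) (w : List Bool) : mu (b :: w) = step b + mu w := by
  simp [mu]

lemma mu_append (u v : List Bool) : mu (u ++ v) = mu u + mu v := by
  simp [mu]

lemma foldr_max_inits : ∀ (w : List Bool) (c e : ℤ),
    ((w.inits.map fun p => c + mu p).foldr max e) = max e (c + N w)
  | [], c, e => by simp [mu, N, max_comm]
  | b :: t, c, e => by
    have ih := foldr_max_inits t (c + step b) e
    simp only [List.inits_cons, List.map_cons, List.map_map, List.foldr_cons, N]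
    have : (List.map ((fun p => c + mu p) ∘ fun q => b :: q) t.inits) =
        (List.map (fun p => (c + step b) + mu p) t.inits) := by
      apply List.map_congr_left
      intro p _
      simp [mu_cons]; ring
    rw [this, ih, mu_nil]
    omega

lemma foldr_min_inits : ∀ (w : List Bool) (c e : ℤ),
    ((w.inits.map fun p => c + mu p).foldr min e) = min e (c + M w)
  | [], c, e => by simp [mu, M, min_comm]
  | b :: t, c, e => by
    have ih := foldr_min_inits t (c + step b) e
    simp only [List.inits_cons, List.map_cons, List.map_map, List.foldr_cons, M]
    have : (List.map ((fun p => c + mu p) ∘ fun q => b :: q) t.inits) =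
        (List.map (fun p => (c + step b) + mu p) t.inits) := by
      apply List.map_congr_left
      intro p _
      simp [mu_cons]; ring
    rw [this, ih, mu_nil]
    omega

lemma nu_eq (w : List Bool) : nu w = max 0 (N w) := by
  have h := foldr_max_inits w 0 0
  simpa [nu] using h

lemma lam_eq (w : List Bool) : lam w = -(min 0 (M w)) := by
  have h := foldr_min_inits w 0 0
  simp only [zero_add] at h
  simp [lam, h]

lemma N_append : ∀ (u v : List Bool), N (u ++ v) = max (N u) (mu u + N v)
  | [], v => by
    have := N_nonneg v
    simp only [List.nil_append, N, mu_nil]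
    omega
  | b :: t, v => by
    have ih := N_append t v
    rw [List.cons_append]
    show max 0 (step b + N (t ++ v)) = max (N (b :: t)) (mu (b :: t) + N v)
    rw [ih, mu_cons]
    show _ = max (max 0 (step b + N t)) _
    omega

lemma M_append : ∀ (u v : List Bool), M (u ++ v) = min (M u) (mu u + M v)
  | [], v => by
    have := M_nonpos v
    simp only [List.nil_append, M, mu_nil]
    omega
  | b :: t, v => by
    have ih := M_append t v
    rw [List.cons_append]
    show min 0 (step b + M (t ++ v)) = min (M (b :: t)) (mu (b :: t) + M v)
    rw [ih, mu_cons]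
    show _ = min (min 0 (step b + M t)) _
    omega

lemma mu_rep_true (n : ℕ) : mu (List.replicate n true) = n := by
  simp [mu, List.map_replicate, step]

lemma mu_rep_false (n : ℕ) : mu (List.replicate n false) = -n := by
  simp [mu, List.map_replicate, step]

lemma N_rep_true : ∀ n : ℕ, N (List.replicate n true) = n
  | 0 => rfl
  | n + 1 => by
    have ih := N_rep_true n
    show max 0 (step true + N (List.replicate n true)) = ((n + 1 : ℕ) : ℤ)
    rw [step_true, ih]
    push_cast
    omega

lemma N_rep_false : ∀ n : ℕ, N (List.replicate n false) = 0
  | 0 => rfl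
  | n + 1 => by
    have ih := N_rep_false n
    show max 0 (step false + N (List.replicate n false)) = 0
    rw [step_false, ih]
    omega

lemma M_rep_true : ∀ n : ℕ, M (List.replicate n true) = 0
  | 0 => rfl
  | n + 1 => by
    have ih := M_rep_true n
    show min 0 (step true + M (List.replicate n true)) = 0
    rw [step_true, ih]
    omega

lemma M_rep_false : ∀ n : ℕ, M (List.replicate n false) = -n
  | 0 => rfl
  | n + 1 => by
    have ih := M_rep_false n
    show min 0 (step false + M (List.replicate n false)) = -((n + 1 : ℕ) : ℤ)
    rw [step_false, ih]
    push_cast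
    omega

lemma split_at_none {α : Type*} :
    ∀ (l1 l2 r1 r2 : List (Option α)),
      l1 ++ none :: r1 = l2 ++ none :: r2 → none ∉ l1 → none ∉ l2 →
      l1 = l2 ∧ r1 = r2
  | [], [], r1, r2, h, _, _ => by simpa using h
  | [], a :: t, r1, r2, h, _, h2 => by
    simp only [List.nil_append, List.cons_append, List.cons.injEq] at h
    exact absurd (h.1 ▸ (List.mem_cons_self : a ∈ a :: t)) h2
  | a :: t, [], r1, r2, h, h1, _ => by
    simp only [List.nil_append, List.cons_append, List.cons.injEq] at h
    exact absurd (h.1 ▸ (List.mem_cons_self : a ∈ a :: t)) h1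
  | a :: t, a' :: t', r1, r2, h, h1, h2 => by
    simp only [List.cons_append, List.cons.injEq] at h
    have := split_at_none t t' r1 r2 h.2 (fun hm => h1 (List.mem_cons_of_mem _ hm))
      (fun hm => h2 (List.mem_cons_of_mem _ hm))
    exact ⟨by rw [h.1, this.1], this.2⟩

lemma winv_rep_true (d : ℕ) : winv (List.replicate d true) = List.replicate d false := by
  simp [winv, List.reverse_replicate, List.map_replicate]

lemma winv_winv (w : List Bool) : winv (winv w) = w := by
  simp [winv, List.map_reverse, List.reverse_reverse, List.map_map,
    Function.comp_def, Bool.not_not]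

lemma winv_inj : Function.Injective winv := by
  intro u v h
  have := congrArg winv h
  rwa [winv_winv, winv_winv] at this

end StmtAux

open StmtAux in
/-- Characterization of the words of shape x^a x̄^b x^c # x̄^d lying in
WP(FIM₁): exactly when b ≤ a, max(a, a-b+c) = d and a-b+c = d. -/
theorem stmt10 (a b c d : ℕ) :
    (List.map some (List.replicate a true ++ List.replicate b false ++
        List.replicate c true) ++ [none] ++
      List.map some (List.replicate d false) : List (Option Bool)) ∈ WP1 ↔
    (b : ℤ) ≤ a ∧ max (a : ℤ) ((a : ℤ) - b + c) = d ∧ (a : ℤ) - b + c = d := by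
  set U : List Bool := List.replicate a true ++ List.replicate b false ++
    List.replicate c true with hU
  set V : List Bool := List.replicate d true with hV
  have hmuU : mu U = (a : ℤ) - b + c := by
    simp [hU, mu_append, mu_rep_true, mu_rep_false]; ring
  have hNU : N U = max (a : ℤ) ((a : ℤ) - b + c) := by
    simp [hU, N_append, mu_append, mu_rep_true, mu_rep_false,
      N_rep_true, N_rep_false]
    omega
  have hMU : M U = min 0 ((a : ℤ) - b) := by
    simp [hU, M_append, mu_append, mu_rep_true, mu_rep_false,
      M_rep_true, M_rep_false]
    omega
  have hmuV : mu V = (d : ℤ) := mu_rep_true d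
  have hNV : N V = (d : ℤ) := N_rep_true d
  have hMV : M V = 0 := M_rep_true d
  constructor
  · rintro ⟨u, v, hw, hl, hn, hm⟩
    have hw' : List.map some U ++ none :: List.map some (List.replicate d false) =
        List.map some u ++ none :: List.map some (winv v) := by
      simpa [emb, List.append_assoc] using hw
    have hsplit := split_at_none _ _ _ _ hw'
      (by simp) (by simp)
    have hu : u = U := by
      have := hsplit.1
      exact (List.map_injective_iff.mpr (Option.some_injective _) this.symm)
    have hv : v = V := by
      have h2 : winv v = List.replicate d false :=
        (List.map_injective_iff.mpr (Option.some_injective _) hsplit.2).symm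
      apply winv_inj
      rw [h2, hV, winv_rep_true]
    rw [hu, hv] at hl hn hm
    rw [lam_eq, lam_eq, hMU, hMV] at hl
    rw [nu_eq, nu_eq, hNU, hNV] at hn
    rw [hmuU, hmuV] at hm
    have ha : (0 : ℤ) ≤ a := Int.ofNat_nonneg a
    have hd : (0 : ℤ) ≤ d := Int.ofNat_nonneg d
    refine ⟨by omega, by omega, hm⟩
  · rintro ⟨h1, h2, h3⟩
    refine ⟨U, V, ?_, ?_, ?_, ?_⟩
    · simp [emb, hV, winv_rep_true, List.append_assoc]
    · rw [lam_eq, lam_eq, hMU, hMV]; omega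
    · rw [nu_eq, nu_eq, hNU, hNV]
      have ha : (0 : ℤ) ≤ a := Int.ofNat_nonneg a
      omega
    · rw [hmuU, hmuV]; exact h3
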